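/- arXiv:2512.10136 — 3 statements merged into one kernel-verified Lean document; each statement's English description precedes it below -/
import Mathlib

section
/- For every integer d ≥ 1 there exists a constant c ∈ (0,1), depending only on d, with the following property. Let w be a bounded solution of the supercooled parabolic obstacle problem on Q₂ = B₂ × (−4,4) with (0,0) a singular point whose blow-up profile is −t (i.e. (0,0) ∈ Σ_d), let δ ∈ (0, c/10) and r ∈ (0,1), and suppose |w(x,t) − (−t)| ≤ δ r² for all (x,t) ∈ Q_{2r}⁻ = B_{2r} × (−4r², 0]. Then B_r × [−r², −c^{−1}δ r²] ⊆ {w > 0} and B_r × [c^{−1}δ r², r²] ⊆ {w = 0}. -/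
open Set MeasureTheory Filter Metric Topology
open scoped ENNReal NNReal

noncomputable section

/-- `d`-dimensional Euclidean space. -/
abbrev EucSp (d : ℕ) : Type := EuclideanSpace ℝ (Fin d)

/-- Space-time `ℝ^d × ℝ`; a point is written `(x, t)`. -/
abbrev Pt (d : ℕ) : Type := EucSp d × ℝ

/-- The time derivative `∂ₜ w`. -/
noncomputable def timeDeriv {d : ℕ} (w : Pt d → ℝ) (p : Pt d) : ℝ :=
  deriv (fun s : ℝ => w (p.1, s)) p.2

/-- The second time derivative `∂ₜₜ w`. -/
noncomputable def timeDeriv2 {d : ℕ} (w : Pt d → ℝ) (p : Pt d) : ℝ :=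
  iteratedDeriv 2 (fun s : ℝ => w (p.1, s)) p.2

/-- Directional (spatial) derivative `∂ₑ w`. -/
noncomputable def dirDeriv {d : ℕ} (w : Pt d → ℝ) (e : EucSp d) (p : Pt d) : ℝ :=
  deriv (fun s : ℝ => w (p.1 + s • e, p.2)) 0

/-- Second directional (spatial) derivative `∂²w/∂e²`. -/
noncomputable def dirDeriv2 {d : ℕ} (w : Pt d → ℝ) (e : EucSp d) (p : Pt d) : ℝ :=
  iteratedDeriv 2 (fun s : ℝ => w (p.1 + s • e, p.2)) 0

/-- Spatial Laplacian `Δw`. -/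
noncomputable def spaceLap {d : ℕ} (w : Pt d → ℝ) (p : Pt d) : ℝ :=
  ∑ i : Fin d, dirDeriv2 w (EuclideanSpace.single i (1:ℝ)) p

/-- Norm of the spatial gradient `|∇w|`. -/
noncomputable def gradNorm {d : ℕ} (w : Pt d → ℝ) (p : Pt d) : ℝ :=
  Real.sqrt (∑ i : Fin d, (dirDeriv w (EuclideanSpace.single i (1:ℝ)) p) ^ 2)

/-- The positivity set `{w > 0}` (within the domain `D`). -/
def posSet {d : ℕ} (D : Set (Pt d)) (w : Pt d → ℝ) : Set (Pt d) :=
  {p | p ∈ D ∧ 0 < w p}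

/-- The free boundary `∂{w>0}`, relative to the domain `D`. -/
def freeBdry {d : ℕ} (D : Set (Pt d)) (w : Pt d → ℝ) : Set (Pt d) :=
  frontier (posSet D w) ∩ D

/-- The parabolic cylinder `Q_r = B_r × (−r², r²)`. -/
def parCyl (d : ℕ) (r : ℝ) : Set (Pt d) :=
  (Metric.ball (0 : EucSp d) r) ×ˢ (Ioo (-(r^2)) (r^2))

/-- A bounded solution of the supercooled parabolic obstacle problem on an open set `D`:
`w ≥ 0` is bounded and continuous, nonincreasing and strictly decreasing (while positive) in
time, smooth on `{w > 0}` where it solves `∂ₜ w − Δw = −1` classically, and it satisfies the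
distributional equation `∂ₜ w − Δw = −1_{{w>0}}`. -/
structure IsSupercooledSol (d : ℕ) (D : Set (Pt d)) (w : Pt d → ℝ) : Prop where
  bounded : ∃ M : ℝ, ∀ p ∈ D, |w p| ≤ M
  cont : ContinuousOn w D
  nonneg : ∀ p ∈ D, 0 ≤ w p
  mono : ∀ (x : EucSp d) (t₁ t₂ : ℝ), t₁ ≤ t₂ →
    (∀ t ∈ Icc t₁ t₂, ((x, t) : Pt d) ∈ D) → w (x, t₂) ≤ w (x, t₁)
  strict_decr : ∀ (x : EucSp d) (t₁ t₂ : ℝ), t₁ < t₂ → ((x, t₁) : Pt d) ∈ D →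
    ((x, t₂) : Pt d) ∈ D → 0 < w (x, t₁) → w (x, t₂) < w (x, t₁)
  smooth : ContDiffOn ℝ (⊤ : ℕ∞) w (posSet D w)
  pde : ∀ p ∈ posSet D w, timeDeriv w p - spaceLap w p = -1
  weak_eq : ∀ φ : Pt d → ℝ, ContDiff ℝ (⊤ : ℕ∞) φ → HasCompactSupport φ →
    tsupport φ ⊆ D →
    ∫ p in D, w p * (timeDeriv φ p + spaceLap φ p) = ∫ p in D, (posSet D w).indicator φ p

/-- The quadratic form `x ↦ ⟨Ax, x⟩`. -/
noncomputable def quadForm {d : ℕ} (A : Matrix (Fin d) (Fin d) ℝ) (x : EucSp d) : ℝ :=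
  ∑ i : Fin d, ∑ j : Fin d, A i j * x i * x j

/-- `(x₀,t₀)` is a singular free boundary point of `w` with blow-up profile
`p(x,t) = −mt + ½⟨Ax,x⟩`: the parabolic rescalings `r⁻² w(x₀+rx, t₀+r²t)` converge to `p`
uniformly on compact subsets of `ℝ^d × (−∞,0]` as `r ↓ 0`. -/
def IsSingularPt {d : ℕ} (D : Set (Pt d)) (w : Pt d → ℝ) (x₀ : EucSp d) (t₀ : ℝ)
    (m : ℝ) (A : Matrix (Fin d) (Fin d) ℝ) : Prop :=
  ((x₀, t₀) : Pt d) ∈ freeBdry D w ∧ 0 ≤ m ∧ m ≤ 1 ∧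
  A.IsSymm ∧ A.PosSemidef ∧ A.trace = 1 - m ∧
  ∀ R : ℝ, 0 < R → ∀ ε : ℝ, 0 < ε → ∃ r₀ : ℝ, 0 < r₀ ∧ ∀ r : ℝ, 0 < r → r < r₀ →
    ∀ (x : EucSp d) (t : ℝ), ‖x‖ ≤ R → -R ^ 2 ≤ t → t ≤ 0 →
      |(r ^ 2)⁻¹ * w (x₀ + r • x, t₀ + r ^ 2 * t) - (-(m * t) + (1/2) * quadForm A x)| ≤ ε

/-- The singular set `Σ` of `w`. -/
def singSet {d : ℕ} (D : Set (Pt d)) (w : Pt d → ℝ) : Set (Pt d) :=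
  {p : Pt d | ∃ m A, IsSingularPt D w p.1 p.2 m A}

/-- `(x₀,t₀)` is a regular free boundary point of `w`: along some sequence `r_k ↓ 0` the
parabolic rescalings converge to `½ max(x·e,0)²` uniformly on compact subsets. -/
def IsRegularPt {d : ℕ} (D : Set (Pt d)) (w : Pt d → ℝ) (x₀ : EucSp d) (t₀ : ℝ) : Prop :=
  ((x₀, t₀) : Pt d) ∈ freeBdry D w ∧
  ∃ e : EucSp d, ‖e‖ = 1 ∧ ∃ rs : ℕ → ℝ, (∀ k, 0 < rs k) ∧
    Tendsto rs atTop (nhds 0) ∧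
    ∀ R : ℝ, 0 < R → ∀ ε : ℝ, 0 < ε → ∃ N : ℕ, ∀ k, N ≤ k →
      ∀ (x : EucSp d) (t : ℝ), ‖x‖ ≤ R → -R ^ 2 ≤ t → t ≤ 0 →
        |(rs k ^ 2)⁻¹ * w (x₀ + rs k • x, t₀ + rs k ^ 2 * t) -
          (1/2) * (max (∑ i : Fin d, x i * e i) 0) ^ 2| ≤ ε

/-- Space–time, regarded with the parabolic metric
`d_par((x,t),(y,s)) = |x−y| + |t−s|^{1/2}`. -/
structure ParPt (d : ℕ) where
  x : EucSp d
  t : ℝ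

noncomputable instance {d : ℕ} : MetricSpace (ParPt d) where
  dist p q := dist p.x q.x + Real.sqrt (dist p.t q.t)
  dist_self p := by
    show dist p.x p.x + Real.sqrt (dist p.t p.t) = 0
    simp
  dist_comm p q := by
    show dist p.x q.x + Real.sqrt (dist p.t q.t) = dist q.x p.x + Real.sqrt (dist q.t p.t)
    rw [dist_comm, dist_comm p.t q.t]
  dist_triangle p q r := by
    show dist p.x r.x + Real.sqrt (dist p.t r.t) ≤
      (dist p.x q.x + Real.sqrt (dist p.t q.t)) + (dist q.x r.x + Real.sqrt (dist q.t r.t))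
    have h1 : dist p.x r.x ≤ dist p.x q.x + dist q.x r.x := dist_triangle _ _ _
    have ha : (0:ℝ) ≤ dist p.t q.t := dist_nonneg
    have hb : (0:ℝ) ≤ dist q.t r.t := dist_nonneg
    have h2 : Real.sqrt (dist p.t r.t) ≤ Real.sqrt (dist p.t q.t) + Real.sqrt (dist q.t r.t) := by
      have h3 : Real.sqrt (dist p.t r.t) ≤ Real.sqrt (dist p.t q.t + dist q.t r.t) :=
        Real.sqrt_le_sqrt (dist_triangle _ _ _)
      have e1 : Real.sqrt (dist p.t q.t) ^ 2 = dist p.t q.t := Real.sq_sqrt ha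
      have e2 : Real.sqrt (dist q.t r.t) ^ 2 = dist q.t r.t := Real.sq_sqrt hb
      have h5 : Real.sqrt (dist p.t q.t + dist q.t r.t) ≤
          Real.sqrt ((Real.sqrt (dist p.t q.t) + Real.sqrt (dist q.t r.t)) ^ 2) := by
        apply Real.sqrt_le_sqrt
        nlinarith [Real.sqrt_nonneg (dist p.t q.t), Real.sqrt_nonneg (dist q.t r.t)]
      have h6 : Real.sqrt ((Real.sqrt (dist p.t q.t) + Real.sqrt (dist q.t r.t)) ^ 2) =
          Real.sqrt (dist p.t q.t) + Real.sqrt (dist q.t r.t) :=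
        Real.sqrt_sq (by positivity)
      linarith [h5.trans_eq h6]
    linarith
  eq_of_dist_eq_zero := by
    intro p q h
    have h' : dist p.x q.x + Real.sqrt (dist p.t q.t) = 0 := h
    have ha : (0:ℝ) ≤ dist p.x q.x := dist_nonneg
    have hb : (0:ℝ) ≤ Real.sqrt (dist p.t q.t) := Real.sqrt_nonneg _
    have hx : dist p.x q.x = 0 := by linarith
    have ht0 : Real.sqrt (dist p.t q.t) = 0 := by linarith
    have ht : dist p.t q.t = 0 := by
      by_contra hc
      have hpos : 0 < dist p.t q.t := lt_of_le_of_ne dist_nonneg (Ne.symm hc)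
      have := Real.sqrt_pos.mpr hpos
      linarith
    have hx' : p.x = q.x := by rwa [dist_eq_zero] at hx
    have ht' : p.t = q.t := by rwa [dist_eq_zero] at ht
    cases p; cases q
    simp_all

/-- The tautological identification of space-time with parabolic space-time. -/
def toParPt {d : ℕ} (p : Pt d) : ParPt d := ⟨p.1, p.2⟩

/-- The parabolic Hausdorff dimension of a set in space-time: the Hausdorff dimension
computed with respect to the parabolic metric. -/
noncomputable def dimPar {d : ℕ} (E : Set (Pt d)) : ℝ≥0∞ := dimH (toParPt '' E)

end

/-! The positivity region is read off directly from `|w + t| ≤ δr²`. For the cleaning region,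
compare `w` with the paraboloid `Ψ = a + q|x - x̄|² - μ(t - t₀)`: when `2dq + μ < 1` it is a strict
supersolution, since at a negative minimum of `Ψ - w` inside the parabolic boundary we have `w > 0`,
hence `∂ₜw - Δw = -1`, while the minimum forces `∂ₜw ≥ -μ` and `Δw ≤ 2dq`. Starting from
`w(·, 0) ≤ δr²` on `B_r(x̄)`, the barrier with `q = δ` and `μ ↑ 1 - 2dδ` gives `w(x̄, T) = 0` at
`T = δr²/(1 - 2dδ) ≤ 2δr²`, and `w` stays zero afterwards because it is nonincreasing in time. -/

theorem IsLocalMin.iteratedDeriv_two_nonneg {f : ℝ → ℝ} {x₀ : ℝ} (h : IsLocalMin f x₀)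
    (hc : ContinuousAt f x₀) : 0 ≤ iteratedDeriv 2 f x₀ := by
  rw [iteratedDeriv_succ, iteratedDeriv_one]
  by_contra! hneg
  -- the second-derivative test would make `x₀` a local maximum too, so `f` is locally constant
  have hmax := isLocalMax_of_deriv_deriv_neg hneg h.deriv_eq_zero hc
  have hconst : f =ᶠ[𝓝 x₀] fun _ => f x₀ := by
    filter_upwards [h, hmax] with x hmin hmax using le_antisymm hmax hmin
  have hzero : deriv (deriv f) x₀ = 0 := by
    rw [hconst.deriv.deriv_eq]
    simp
  linarith

theorem HasDerivAt.nonpos_of_isMinOn_Icc {g : ℝ → ℝ} {a t₀ t₁ : ℝ} (hg : HasDerivAt g a t₁)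
    (ht : t₀ < t₁) (hmin : IsMinOn g (Icc t₀ t₁) t₁) : a ≤ 0 := by
  have hcone : t₀ - t₁ ∈ posTangentConeAt (Icc t₀ t₁) t₁ := by
    apply mem_posTangentConeAt_of_segment_subset
    rw [add_sub_cancel, segment_symm, segment_eq_Icc ht.le]
  have : 0 ≤ (t₀ - t₁) * a := by
    simpa using hmin.localize.hasFDerivWithinAt_nonneg hg.hasFDerivAt.hasFDerivWithinAt hcone
  nlinarith

section Barrier

variable {d : ℕ}

noncomputable def quadBarrier (xb : EucSp d) (t₀ a q μ : ℝ) (p : Pt d) : ℝ :=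
  a + q * ‖p.1 - xb‖ ^ 2 - μ * (p.2 - t₀)

variable (xb : EucSp d) (t₀ a q μ : ℝ)

theorem contDiff_quadBarrier : ContDiff ℝ (⊤ : ℕ∞) (quadBarrier xb t₀ a q μ) := by
  unfold quadBarrier
  exact (contDiff_const.add (contDiff_const.mul ((contDiff_fst.sub contDiff_const).norm_sq ℝ))).sub
    (contDiff_const.mul (contDiff_snd.sub contDiff_const))

theorem hasDerivAt_quadBarrier_time (x : EucSp d) (t : ℝ) :
    HasDerivAt (fun t => quadBarrier xb t₀ a q μ (x, t)) (-μ) t := by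
  have h := (((hasDerivAt_id t).sub_const t₀).const_mul μ).const_sub (a + q * ‖x - xb‖ ^ 2)
  exact h.congr_deriv (by ring)

theorem iteratedDeriv_two_quadBarrier_line (x e : EucSp d) (t σ : ℝ) :
    iteratedDeriv 2 (fun σ : ℝ => quadBarrier xb t₀ a q μ (x + σ • e, t)) σ = 2 * q * ‖e‖ ^ 2 := by
  have hline : ∀ σ : ℝ, HasDerivAt (fun σ : ℝ => quadBarrier xb t₀ a q μ (x + σ • e, t))
      (2 * q * inner ℝ (x - xb) e + 2 * q * ‖e‖ ^ 2 * σ) σ := by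
    intro σ
    have hnorm := (((hasDerivAt_id σ).smul_const e).const_add x).sub_const xb |>.norm_sq
    refine ((hnorm.const_mul q).const_add a |>.sub_const (μ * (t - t₀))).congr_deriv ?_
    simp only [id, one_smul, add_sub_right_comm x, inner_add_left, real_inner_smul_left,
      real_inner_self_eq_norm_sq]
    ring
  rw [iteratedDeriv_succ, iteratedDeriv_one, funext fun σ => (hline σ).deriv]
  simp

end Barrier

theorem isOpen_posSet {d : ℕ} {D : Set (Pt d)} {w : Pt d → ℝ} (hD : IsOpen D)
    (hw : ContinuousOn w D) : IsOpen (posSet D w) :=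
  hw.isOpen_inter_preimage hD isOpen_Ioi

namespace IsSupercooledSol

variable {d : ℕ} {D : Set (Pt d)} {w : Pt d → ℝ} {p : Pt d} {xb : EucSp d} {t₀ a q μ : ℝ}

theorem contDiffAt (sol : IsSupercooledSol d D w) (hD : IsOpen D) (hp : p ∈ posSet D w) :
    ContDiffAt ℝ (⊤ : ℕ∞) w p :=
  sol.smooth.contDiffAt ((isOpen_posSet hD sol.cont).mem_nhds hp)

theorem neg_le_timeDeriv_of_isMinOn (sol : IsSupercooledSol d D w) (hD : IsOpen D)
    (hp : p ∈ posSet D w) {τ : ℝ} (hτ : τ < p.2)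
    (hmin : IsMinOn (fun t => quadBarrier xb t₀ a q μ (p.1, t) - w (p.1, t)) (Icc τ p.2) p.2) :
    -μ ≤ timeDeriv w p := by
  have hw : HasDerivAt (fun t => w (p.1, t)) (timeDeriv w p) p.2 :=
    ((sol.contDiffAt hD hp).comp p.2 (contDiffAt_const.prodMk contDiffAt_id)).differentiableAt
      (by simp) |>.hasDerivAt
  have := ((hasDerivAt_quadBarrier_time xb t₀ a q μ p.1 p.2).sub hw).nonpos_of_isMinOn_Icc hτ hmin
  linarith

theorem spaceLap_le_of_isLocalMin (sol : IsSupercooledSol d D w) (hD : IsOpen D)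
    (hp : p ∈ posSet D w)
    (hmin : IsLocalMin (fun y => quadBarrier xb t₀ a q μ (y, p.2) - w (y, p.2)) p.1) :
    spaceLap w p ≤ 2 * d * q := by
  have hdir : ∀ i : Fin d, dirDeriv2 w (EuclideanSpace.single i 1) p ≤ 2 * q := by
    intro i
    set e : EucSp d := EuclideanSpace.single i 1
    have hline : ContDiff ℝ (⊤ : ℕ∞) fun σ : ℝ => ((p.1 + σ • e, p.2) : Pt d) := by fun_prop
    have hW : ContDiffAt ℝ (⊤ : ℕ∞) (fun σ : ℝ => w (p.1 + σ • e, p.2)) 0 :=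
      (sol.contDiffAt hD (p := (p.1 + (0 : ℝ) • e, p.2)) (by simpa using hp)).comp 0
        hline.contDiffAt
    have hB : ContDiffAt ℝ (⊤ : ℕ∞) (fun σ : ℝ => quadBarrier xb t₀ a q μ (p.1 + σ • e, p.2)) 0 :=
      ((contDiff_quadBarrier xb t₀ a q μ).comp hline).contDiffAt
    have hmin_line : IsLocalMin (fun σ : ℝ => quadBarrier xb t₀ a q μ (p.1 + σ • e, p.2)
        - w (p.1 + σ • e, p.2)) 0 :=
      have hmin₀ : IsLocalMin (fun y => quadBarrier xb t₀ a q μ (y, p.2) - w (y, p.2))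
          (p.1 + (0 : ℝ) • e) := by simpa using hmin
      hmin₀.comp_continuous (g := fun σ : ℝ => p.1 + σ • e) (by fun_prop)
    have h2 := hmin_line.iteratedDeriv_two_nonneg (hB.continuousAt.sub hW.continuousAt)
    rw [iteratedDeriv_fun_sub (hB.of_le (WithTop.coe_le_coe.mpr le_top))
      (hW.of_le (WithTop.coe_le_coe.mpr le_top)),
      iteratedDeriv_two_quadBarrier_line] at h2
    have he : ‖e‖ = 1 := by simp [e]
    rw [he] at h2
    change iteratedDeriv 2 (fun σ : ℝ => w (p.1 + σ • e, p.2)) 0 ≤ 2 * q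
    linarith
  calc spaceLap w p ≤ ∑ _i : Fin d, 2 * q := Finset.sum_le_sum fun i _ => hdir i
    _ = 2 * d * q := by simp; ring

theorem le_quadBarrier (sol : IsSupercooledSol d D w) (hD : IsOpen D) {s t₁ : ℝ}
    (hμ : 2 * d * q + μ < 1) (hC : closedBall xb s ×ˢ Icc t₀ t₁ ⊆ D)
    (hnonneg : ∀ p ∈ closedBall xb s ×ˢ Icc t₀ t₁, 0 ≤ quadBarrier xb t₀ a q μ p)
    (hbot : ∀ x ∈ closedBall xb s, w (x, t₀) ≤ quadBarrier xb t₀ a q μ (x, t₀))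
    (hlat : ∀ x ∈ sphere xb s, ∀ t ∈ Icc t₀ t₁, w (x, t) ≤ quadBarrier xb t₀ a q μ (x, t)) :
    ∀ p ∈ closedBall xb s ×ˢ Icc t₀ t₁, w p ≤ quadBarrier xb t₀ a q μ p := by
  by_contra! ⟨p₀, hp₀C, hp₀⟩
  have hcont : ContinuousOn (fun p => quadBarrier xb t₀ a q μ p - w p)
      (closedBall xb s ×ˢ Icc t₀ t₁) :=
    (contDiff_quadBarrier xb t₀ a q μ).continuous.continuousOn.sub (sol.cont.mono hC)
  obtain ⟨⟨x, t⟩, ⟨hx, ht⟩, hmin⟩ :=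
    ((isCompact_closedBall xb s).prod isCompact_Icc).exists_isMinOn ⟨p₀, hp₀C⟩ hcont
  rw [isMinOn_iff] at hmin
  have hneg : quadBarrier xb t₀ a q μ (x, t) - w (x, t) < 0 :=
    (hmin p₀ hp₀C).trans_lt (sub_neg.mpr hp₀)
  have hpos : (x, t) ∈ posSet D w := ⟨hC ⟨hx, ht⟩, by linarith [hnonneg _ ⟨hx, ht⟩]⟩
  have ht₀ : t₀ < t := ht.1.lt_of_ne (by rintro rfl; linarith [hbot x hx])
  have hx' : x ∈ ball xb s := (mem_closedBall.mp hx).lt_of_ne fun h => by linarith [hlat x h t ht]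
  have htime := sol.neg_le_timeDeriv_of_isMinOn hD hpos ht₀ <| isMinOn_iff.mpr
    fun t' ht' => hmin (x, t') ⟨hx, ht'.1, ht'.2.trans ht.2⟩
  have hspace := sol.spaceLap_le_of_isLocalMin hD hpos <| by
    filter_upwards [isOpen_ball.mem_nhds hx'] with y hy
    exact hmin (y, t) ⟨ball_subset_closedBall hy, ht⟩
  have hpde := sol.pde _ hpos
  linarith

theorem le_sq_norm_of_le_on_closedBall (sol : IsSupercooledSol d D w) (hD : IsOpen D) {s : ℝ}
    (hq : 0 < q) (hs : 0 < s) (hdq : 2 * d * q < 1)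
    (hC : closedBall xb s ×ˢ Icc t₀ (t₀ + q * s ^ 2 / (1 - 2 * d * q)) ⊆ D)
    (h₀ : ∀ x ∈ closedBall xb s, w (x, t₀) ≤ q * s ^ 2) :
    ∀ x ∈ closedBall xb s, w (x, t₀ + q * s ^ 2 / (1 - 2 * d * q)) ≤ q * ‖x - xb‖ ^ 2 := by
  intro x hx
  set κ := 1 - 2 * d * q
  set T := q * s ^ 2 / κ
  have hκ : 0 < κ := by linarith
  have hT : 0 < T := by positivity
  have hκT : κ * T = q * s ^ 2 := mul_div_cancel₀ _ hκ.ne'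
  have hdecay : ∀ γ ≥ 0, ∀ t ∈ Icc t₀ (t₀ + T), (κ - γ) * (t - t₀) ≤ q * s ^ 2 := by
    intro γ hγ t ht
    nlinarith [mul_le_mul_of_nonneg_left (show t - t₀ ≤ T by linarith [ht.2]) hκ.le,
      mul_nonneg hγ (sub_nonneg.mpr ht.1)]
  -- adding `γ (t - t₀)` makes the barrier a strict supersolution; then let `γ → 0`
  have hbarrier : ∀ γ > 0, w (x, t₀ + T) ≤ q * ‖x - xb‖ ^ 2 + γ * T := by
    intro γ hγ
    have hmp := sol.le_quadBarrier hD (a := q * s ^ 2) (q := q) (μ := κ - γ) (by linarith) hC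
      ?_ ?_ ?_ (x, t₀ + T) ⟨hx, by linarith, le_rfl⟩
    · simp only [quadBarrier, add_sub_cancel_left] at hmp
      linarith
    · rintro ⟨y, t⟩ ⟨-, ht⟩
      simp only [quadBarrier]
      nlinarith [hdecay γ hγ.le t ht, mul_nonneg hq.le (sq_nonneg ‖y - xb‖)]
    · intro y hy
      simp only [quadBarrier, sub_self, mul_zero, sub_zero]
      nlinarith [h₀ y hy, mul_nonneg hq.le (sq_nonneg ‖y - xb‖)]
    · intro y hy t ht
      have hmono : w (y, t) ≤ w (y, t₀) :=
        sol.mono y t₀ t ht.1 fun t' ht' => hC ⟨sphere_subset_closedBall hy, ht'.1, ht'.2.trans ht.2⟩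
      simp only [quadBarrier, mem_sphere_iff_norm.mp hy]
      linarith [hdecay γ hγ.le t ht, h₀ y (sphere_subset_closedBall hy)]
  refine le_of_forall_pos_le_add fun η hη => ?_
  simpa [div_mul_cancel₀ _ hT.ne'] using hbarrier (η / T) (by positivity)

theorem eq_zero_of_le_on_ball_at_zero (sol : IsSupercooledSol d D w) (hD : IsOpen D) {δ r : ℝ}
    (hδ : 0 < δ) (hr : 0 < r) (hdδ : 4 * d * δ ≤ 1)
    (hQ : ball (0 : EucSp d) (2 * r) ×ˢ Icc 0 (r ^ 2) ⊆ D)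
    (h₀ : ∀ x : EucSp d, ‖x‖ < 2 * r → w (x, 0) ≤ δ * r ^ 2)
    {x : EucSp d} {t : ℝ} (hx : ‖x‖ < r) (ht : t ∈ Icc (2 * δ * r ^ 2) (r ^ 2)) :
    w (x, t) = 0 := by
  set T := δ * r ^ 2 / (1 - 2 * d * δ)
  have hδr : 0 < δ * r ^ 2 := by positivity
  have hT₀ : 0 ≤ T := div_nonneg hδr.le (by linarith)
  have hT : T ≤ 2 * δ * r ^ 2 := by
    rw [div_le_iff₀ (by linarith)]
    nlinarith
  have hball : closedBall x r ⊆ ball 0 (2 * r) :=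
    closedBall_subset_ball' (by rw [dist_zero_right]; linarith)
  have hx₀ : x ∈ closedBall x r := mem_closedBall_self hr.le
  have hC : closedBall x r ×ˢ Icc 0 (0 + T) ⊆ D :=
    fun p hp => hQ ⟨hball hp.1, hp.2.1, by linarith [hp.2.2, ht.1, ht.2]⟩
  have hcenter : w (x, 0 + T) ≤ δ * ‖x - x‖ ^ 2 :=
    sol.le_sq_norm_of_le_on_closedBall hD hδ hr (by linarith) hC
      (fun y hy => h₀ y (mem_ball_zero_iff.mp (hball hy))) x hx₀
  have hmono : w (x, t) ≤ w (x, 0 + T) :=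
    sol.mono x _ t (by linarith [ht.1]) fun t' ht' =>
      hQ ⟨hball hx₀, by linarith [ht'.1], ht'.2.trans ht.2⟩
  have hnonneg : 0 ≤ w (x, t) := sol.nonneg _ (hQ ⟨hball hx₀, by linarith [ht.1], ht.2⟩)
  rw [sub_self, norm_zero] at hcenter
  linarith

end IsSupercooledSol

theorem isOpen_parCyl (d : ℕ) (r : ℝ) : IsOpen (parCyl d r) :=
  isOpen_ball.prod isOpen_Ioo

/-- Two-sided superquadratic cleaning in the top stratum: there is a
dimensional constant `c ∈ (0,1)` such that if `(0,0)` is a singular point with blow-up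
profile `−t` and `|w − (−t)| ≤ δr²` on `Q_{2r}⁻ = B_{2r} × (−4r², 0]` for some
`δ ∈ (0, c/10)`, `r ∈ (0,1)`, then `B_r × [−r², −c⁻¹δr²] ⊆ {w > 0}` and
`B_r × [c⁻¹δr², r²] ⊆ {w = 0}`. -/
theorem supercooled_two_sided_cleaning (d : ℕ) (hd : 1 ≤ d) :
    ∃ c : ℝ, 0 < c ∧ c < 1 ∧
      ∀ w : Pt d → ℝ, IsSupercooledSol d (parCyl d 2) w →
        IsSingularPt (parCyl d 2) w 0 0 1 0 →
        ∀ δ : ℝ, 0 < δ → δ < c/10 → ∀ r : ℝ, 0 < r → r < 1 →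
          (∀ p : Pt d, ‖p.1‖ < 2*r → -(2*r)^2 < p.2 → p.2 ≤ 0 →
            |w p - (-p.2)| ≤ δ * r^2) →
          (∀ p : Pt d, ‖p.1‖ < r → p.2 ∈ Icc (-(r^2)) (-(c⁻¹ * δ * r^2)) →
            p ∈ posSet (parCyl d 2) w) ∧
          (∀ p : Pt d, ‖p.1‖ < r → p.2 ∈ Icc (c⁻¹ * δ * r^2) (r^2) → w p = 0) := by
  have hd' : (1 : ℝ) ≤ d := by exact_mod_cast hd
  refine ⟨(4 * d)⁻¹, by positivity, inv_lt_one_of_one_lt₀ (by linarith), ?_⟩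
  intro w sol _ δ hδ hδc r hr hr1 happrox
  rw [inv_inv]
  have hδd : 40 * d * δ < 1 := by
    have := mul_lt_mul_of_pos_left hδc (by positivity : (0 : ℝ) < 40 * d)
    field_simp at this
    linarith
  have hδr : 0 < δ * r ^ 2 := by positivity
  have hQ : ball (0 : EucSp d) (2 * r) ×ˢ Icc 0 (r ^ 2) ⊆ parCyl d 2 :=
    fun p ⟨hx, ht⟩ => ⟨ball_subset_ball (by linarith) hx, by nlinarith [ht.1], by nlinarith [ht.2]⟩
  refine ⟨fun ⟨x, t⟩ hx ht => ?_, fun ⟨x, t⟩ hx ht => ?_⟩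
  · have hclose :=
      abs_le.mp (happrox (x, t) (by linarith) (by nlinarith [ht.1]) (by nlinarith [ht.2]))
    exact ⟨⟨mem_ball_zero_iff.mpr (by linarith), by nlinarith [ht.1], by nlinarith [ht.2]⟩,
      by nlinarith [ht.2]⟩
  · refine sol.eq_zero_of_le_on_ball_at_zero (isOpen_parCyl d 2) hδ hr (by linarith) hQ
      (fun y hy => ?_) hx ⟨by nlinarith [ht.1], ht.2⟩
    simpa using (abs_le.mp (happrox (y, 0) hy (by nlinarith) le_rfl)).2
end

section
/- Let d ≥ 1, β ≥ 0, and let E ⊆ ℝ^d × (−1,1) be a set whose spatial projection π_x(E) := {x ∈ ℝ^d : (x,t) ∈ E for some t} has (Euclidean) Hausdorff dimension at most β. Assume that for every (x₀,t₀) ∈ E there exist constants C > 0 and ρ > 0 such that {(x,t) ∈ B_ρ(x₀) × (−1,1) : t − t₀ < −C|x − x₀|²} ∩ E = ∅. Then dim_par(E) ≤ β. -/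
open Set MeasureTheory Filter Metric Topology
open scoped ENNReal NNReal

/-! Call `p₀ = (x₀, t₀) ∈ E` `(C, ρ)`-clean if, over `B_ρ(x₀)`, the set `E` lies above the
backward parabola `t - t₀ = -C |x - x₀|²`. For two points that are clean with the same constants
the condition applies in both directions, so `|t - s| ≤ C |x - y|²` when `|x - y| < ρ`. Hence the
clean points form a graph over their spatial projection, and the graph map is locally Lipschitz
into the parabolic metric with constant `1 + √C`: their parabolic dimension is at most that of the
projection. Every point of `E` is `(n, (n + 1)⁻¹)`-clean for some `n : ℕ`, and countable unions do
not increase Hausdorff dimension. -/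

open Function

variable {d : ℕ}

def cleanPoints (E : Set (Pt d)) (C ρ : ℝ) : Set (Pt d) :=
  {p ∈ E | ∀ q ∈ E, q.1 ∈ ball p.1 ρ → -C * ‖q.1 - p.1‖ ^ 2 ≤ q.2 - p.2}

lemma cleanPoints_subset (E : Set (Pt d)) (C ρ : ℝ) : cleanPoints E C ρ ⊆ E :=
  fun _ hp => hp.1

lemma cleanPoints_mono {E : Set (Pt d)} {C C' ρ ρ' : ℝ} (hC : C ≤ C') (hρ : ρ' ≤ ρ) :
    cleanPoints E C ρ ⊆ cleanPoints E C' ρ' := by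
  refine fun p ⟨hpE, hp⟩ => ⟨hpE, fun q hqE hq => ?_⟩
  have := hp q hqE (ball_subset_ball hρ hq)
  nlinarith [sq_nonneg ‖q.1 - p.1‖]

lemma exists_nat_mem_cleanPoints {E : Set (Pt d)} {p : Pt d} {C ρ : ℝ} (hρ : 0 < ρ)
    (hp : p ∈ cleanPoints E C ρ) : ∃ n : ℕ, p ∈ cleanPoints E n (n + 1)⁻¹ := by
  obtain ⟨n, hn⟩ := exists_nat_ge (max C ρ⁻¹)
  refine ⟨n, cleanPoints_mono (le_of_max_le_left hn) ?_ hp⟩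
  exact inv_le_of_inv_le₀ hρ (by linarith [le_of_max_le_right hn])

lemma abs_sub_snd_le_of_mem_cleanPoints {E : Set (Pt d)} {C ρ : ℝ} {p q : Pt d}
    (hp : p ∈ cleanPoints E C ρ) (hq : q ∈ cleanPoints E C ρ) (hpq : dist p.1 q.1 < ρ) :
    |p.2 - q.2| ≤ C * dist p.1 q.1 ^ 2 := by
  have hq_above := hp.2 q hq.1 (mem_ball.2 (by rwa [dist_comm]))
  have hp_above := hq.2 p hp.1 (mem_ball.2 hpq)
  rw [← dist_eq_norm] at hq_above hp_above
  rw [dist_comm q.1] at hq_above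
  exact abs_le.2 ⟨by linarith, by linarith⟩

lemma injOn_fst_cleanPoints {E : Set (Pt d)} {C ρ : ℝ} (hρ : 0 < ρ) :
    InjOn Prod.fst (cleanPoints E C ρ) := by
  intro p hp q hq hpq
  have h := abs_sub_snd_le_of_mem_cleanPoints hp hq (by rwa [hpq, dist_self])
  rw [hpq, dist_self, sq, mul_zero, mul_zero, abs_nonpos_iff, sub_eq_zero] at h
  exact Prod.ext hpq h

lemma dist_toParPt_le_of_abs_sub_snd_le {p q : Pt d} {C : ℝ} (hC : 0 ≤ C)
    (h : |p.2 - q.2| ≤ C * dist p.1 q.1 ^ 2) :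
    dist (toParPt p) (toParPt q) ≤ (1 + √C) * dist p.1 q.1 := by
  have ht : √(dist p.2 q.2) ≤ √C * dist p.1 q.1 := by
    calc √(dist p.2 q.2) ≤ √(C * dist p.1 q.1 ^ 2) := Real.sqrt_le_sqrt h
      _ = √C * dist p.1 q.1 := by rw [Real.sqrt_mul hC, Real.sqrt_sq dist_nonneg]
  change dist p.1 q.1 + √(dist p.2 q.2) ≤ _
  linarith

lemma dimPar_cleanPoints_le {E : Set (Pt d)} {C ρ : ℝ} (hC : 0 ≤ C) (hρ : 0 < ρ) :
    dimPar (cleanPoints E C ρ) ≤ dimH (Prod.fst '' cleanPoints E C ρ) := by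
  set S := cleanPoints E C ρ
  set g : EucSp d → ParPt d := fun x => toParPt (invFunOn Prod.fst S x)
  have hg : toParPt '' S = g '' (Prod.fst '' S) := by
    rw [image_image]
    exact (image_congr fun p hp => congrArg toParPt
      ((injOn_fst_cleanPoints hρ).leftInvOn_invFunOn hp)).symm
  have hmem : ∀ x ∈ Prod.fst '' S, invFunOn Prod.fst S x ∈ S ∧ (invFunOn Prod.fst S x).1 = x :=
    fun x ⟨p, hp, hpx⟩ => invFunOn_pos ⟨p, hp, hpx⟩
  unfold dimPar
  rw [hg]
  refine dimH_image_le_of_locally_lipschitzOn fun x₀ _ => ⟨(1 + √C).toNNReal,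
    Prod.fst '' S ∩ ball x₀ (ρ / 2), inter_mem_nhdsWithin _ (ball_mem_nhds x₀ (half_pos hρ)), ?_⟩
  refine lipschitzOnWith_iff_dist_le_mul.2 fun x ⟨hx, hx₀⟩ y ⟨hy, hy₀⟩ => ?_
  obtain ⟨hxS, hxfst⟩ := hmem x hx
  obtain ⟨hyS, hyfst⟩ := hmem y hy
  have hxy : dist x y < ρ := by
    linarith [dist_triangle_right x y x₀, mem_ball.1 hx₀, mem_ball.1 hy₀]
  have h := abs_sub_snd_le_of_mem_cleanPoints hxS hyS (by rwa [hxfst, hyfst])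
  have hlip := dist_toParPt_le_of_abs_sub_snd_le hC h
  rw [hxfst, hyfst] at hlip
  rwa [Real.coe_toNNReal _ (by positivity)]

theorem parabolic_dimension_from_projection_and_cleaning_general
    (d : ℕ) (β : ℝ) (E : Set (Pt d))
    (hE : ∀ p ∈ E, p.2 ∈ Ioo (-1:ℝ) 1)
    (hproj : dimH {x : EucSp d | ∃ t : ℝ, ((x, t) : Pt d) ∈ E} ≤ ENNReal.ofReal β)
    (hclean : ∀ p ∈ E, ∃ C : ℝ, 0 < C ∧ ∃ ρ : ℝ, 0 < ρ ∧ ∀ q : Pt d,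
      q.1 ∈ Metric.ball p.1 ρ → q.2 ∈ Ioo (-1:ℝ) 1 →
      q.2 - p.2 < -C * ‖q.1 - p.1‖^2 → q ∉ E) :
    dimPar E ≤ ENNReal.ofReal β := by
  have hcover : E ⊆ ⋃ n : ℕ, cleanPoints E n (n + 1)⁻¹ := fun p hp => by
    obtain ⟨C, -, ρ, hρ, hfree⟩ := hclean p hp
    exact mem_iUnion.2 <| exists_nat_mem_cleanPoints hρ
      ⟨hp, fun q hq hqρ => not_lt.1 fun hlt => hfree q hqρ (hE q hq) hlt hq⟩
  have hpiece (n : ℕ) : dimPar (cleanPoints E n (n + 1)⁻¹) ≤ ENNReal.ofReal β := by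
    refine (dimPar_cleanPoints_le n.cast_nonneg (by positivity)).trans (le_trans ?_ hproj)
    exact dimH_mono <| image_subset_iff.2 fun p hp => ⟨p.2, cleanPoints_subset _ _ _ hp⟩
  calc dimPar E ≤ dimH (⋃ n : ℕ, toParPt '' cleanPoints E n (n + 1)⁻¹) := by
        rw [← image_iUnion]; exact dimH_mono (image_mono hcover)
    _ = ⨆ n : ℕ, dimPar (cleanPoints E n (n + 1)⁻¹) := dimH_iUnion _
    _ ≤ ENNReal.ofReal β := iSup_le hpiece

/-- A GMT lemma: if `E ⊆ ℝ^d × (−1,1)` has spatial projection of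
Hausdorff dimension at most `β`, and every point of `E` admits a backwards-in-time
parabola free of other points of `E`, then `dim_par(E) ≤ β`. -/
theorem parabolic_dimension_from_projection_and_cleaning
    (d : ℕ) (hd : 1 ≤ d) (β : ℝ) (hβ : 0 ≤ β) (E : Set (Pt d))
    (hE : ∀ p ∈ E, p.2 ∈ Ioo (-1:ℝ) 1)
    (hproj : dimH {x : EucSp d | ∃ t : ℝ, ((x, t) : Pt d) ∈ E} ≤ ENNReal.ofReal β)
    (hclean : ∀ p ∈ E, ∃ C : ℝ, 0 < C ∧ ∃ ρ : ℝ, 0 < ρ ∧ ∀ q : Pt d,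
      q.1 ∈ Metric.ball p.1 ρ → q.2 ∈ Ioo (-1:ℝ) 1 →
      q.2 - p.2 < -C * ‖q.1 - p.1‖^2 → q ∉ E) :
    dimPar E ≤ ENNReal.ofReal β :=
  parabolic_dimension_from_projection_and_cleaning_general d β E hE hproj hclean
end

section
/- Let d ≥ 1, let A be a nonzero symmetric d×d real matrix, let f(x) = ⟨Ax, x⟩, and let α = min{|λ| : λ is a nonzero eigenvalue of A}. Then for every x ∈ ℝ^d, the Euclidean distance from x to the zero set {y ∈ ℝ^d : f(y) = 0} satisfies dist(x, {f = 0}) ≤ α^{−1/2} |f(x)|^{1/2}. -/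
open Set MeasureTheory Filter Metric Topology
open scoped ENNReal NNReal

/-!
Diagonalize `A` in an orthonormal eigenbasis, so that `f x = ∑ λᵢ cᵢ²` in the coordinates `c` of
`x`. If `f x ≥ 0`, write `x = x₊ + x₋` along the eigenvalues `λᵢ > 0` and `λᵢ ≤ 0`, and let
`s ∈ [0, 1]` solve `s² f x₊ + f x₋ = 0` (intermediate value theorem). Then `y = s x₊ + x₋` lies on
`{f = 0}` and `α ‖x - y‖² = (1 - s)² α ‖x₊‖² ≤ (1 - s)² f x₊ ≤ (1 - s²) f x₊ = f x`.
The case `f x ≤ 0` follows by replacing `A` with `-A`.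
-/

open scoped RealInnerProductSpace

theorem quadForm_eq_inner {d : ℕ} (A : Matrix (Fin d) (Fin d) ℝ) (z : EucSp d) :
    quadForm A z = ⟪Matrix.toEuclideanLin A z, z⟫ := by
  simp only [quadForm, Matrix.toLpLin_apply, PiLp.inner_apply, Matrix.mulVec, dotProduct,
    RCLike.inner_apply, conj_trivial, Finset.mul_sum]
  exact Finset.sum_congr rfl fun i _ => Finset.sum_congr rfl fun j _ => by ring

theorem inner_eigenvectorBasis_toEuclideanLin {d : ℕ} {A : Matrix (Fin d) (Fin d) ℝ}
    (hA : A.IsHermitian) (i : Fin d) (z : EucSp d) :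
    ⟪hA.eigenvectorBasis i, Matrix.toEuclideanLin A z⟫ =
      hA.eigenvalues i * ⟪hA.eigenvectorBasis i, z⟫ := by
  rw [← Matrix.isSymmetric_toEuclideanLin_iff.mpr hA, Matrix.toLpLin_apply,
    hA.mulVec_eigenvectorBasis, WithLp.toLp_smul, real_inner_smul_left]

theorem quadForm_eq_sum_eigenvalues_mul_sq {d : ℕ} {A : Matrix (Fin d) (Fin d) ℝ}
    (hA : A.IsHermitian) (z : EucSp d) :
    quadForm A z = ∑ i, hA.eigenvalues i * hA.eigenvectorBasis.repr z i ^ 2 := by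
  rw [quadForm_eq_inner, ← hA.eigenvectorBasis.sum_inner_mul_inner]
  refine Finset.sum_congr rfl fun i _ => ?_
  rw [real_inner_comm, inner_eigenvectorBasis_toEuclideanLin, OrthonormalBasis.repr_apply_apply]
  ring

theorem exists_mem_Icc_sq_mul_add_eq_zero {a b : ℝ} (hb : b ≤ 0) (hab : 0 ≤ a + b) :
    ∃ s ∈ Icc (0 : ℝ) 1, s ^ 2 * a + b = 0 := by
  have hivt := intermediate_value_Icc zero_le_one (f := fun s : ℝ => s ^ 2 * a + b)
    (by fun_prop)
  exact hivt ⟨by simpa using hb, by simpa using hab⟩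

section WeightedSumSq

variable {ι : Type*} [Fintype ι] {w : ι → ℝ} {α : ℝ}

theorem exists_sum_mul_sq_eq_zero_of_nonneg (hw : ∀ i, 0 < w i → α ≤ w i) (c : ι → ℝ)
    (hc : 0 ≤ ∑ i, w i * c i ^ 2) :
    ∃ c' : ι → ℝ, ∑ i, w i * c' i ^ 2 = 0 ∧ α * ∑ i, (c i - c' i) ^ 2 ≤ ∑ i, w i * c i ^ 2 := by
  classical
  set p : ι → ℝ := fun i => if 0 < w i then c i else 0
  set n : ι → ℝ := fun i => if 0 < w i then 0 else c i
  set P := ∑ i, w i * p i ^ 2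
  set N := ∑ i, w i * n i ^ 2
  have hsplit : ∀ t : ℝ, ∑ i, w i * (t * p i + n i) ^ 2 = t ^ 2 * P + N := by
    intro t
    simp only [P, N, Finset.mul_sum, ← Finset.sum_add_distrib]
    refine Finset.sum_congr rfl fun i _ => ?_
    by_cases h : 0 < w i <;> simp only [p, n, h, if_true, if_false] <;> ring
  have hc_split : ∑ i, w i * c i ^ 2 = P + N := by
    have hpn : ∀ i, p i + n i = c i := fun i => by by_cases h : 0 < w i <;> simp [p, n, h]
    simpa [hpn] using hsplit 1
  have hN : N ≤ 0 := Finset.sum_nonpos fun i _ => by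
    by_cases h : 0 < w i <;> simp only [n, h, if_true, if_false]
    · simp
    · nlinarith [sq_nonneg (c i)]
  have hP : α * ∑ i, p i ^ 2 ≤ P := by
    rw [Finset.mul_sum]
    refine Finset.sum_le_sum fun i _ => ?_
    by_cases h : 0 < w i <;> simp only [p, h, if_true, if_false]
    · nlinarith [hw i h, sq_nonneg (c i)]
    · simp
  obtain ⟨s, ⟨hs0, hs1⟩, hs⟩ := exists_mem_Icc_sq_mul_add_eq_zero hN (hc_split ▸ hc)
  refine ⟨fun i => s * p i + n i, by rw [hsplit, hs], ?_⟩
  have hdist : ∑ i, (c i - (s * p i + n i)) ^ 2 = (1 - s) ^ 2 * ∑ i, p i ^ 2 := by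
    rw [Finset.mul_sum]
    refine Finset.sum_congr rfl fun i _ => ?_
    by_cases h : 0 < w i <;> simp only [p, n, h, if_true, if_false] <;> ring
  calc α * ∑ i, (c i - (s * p i + n i)) ^ 2 = (1 - s) ^ 2 * (α * ∑ i, p i ^ 2) := by
        rw [hdist]; ring
    _ ≤ (1 - s) ^ 2 * P := by gcongr
    _ ≤ P + N := by
        have hP0 : 0 ≤ P := by linarith
        nlinarith [mul_nonneg (mul_nonneg hs0 (sub_nonneg.2 hs1)) hP0]
    _ = ∑ i, w i * c i ^ 2 := hc_split.symm

theorem exists_sum_mul_sq_eq_zero (hw : ∀ i, w i ≠ 0 → α ≤ |w i|) (c : ι → ℝ) :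
    ∃ c' : ι → ℝ, ∑ i, w i * c' i ^ 2 = 0 ∧ α * ∑ i, (c i - c' i) ^ 2 ≤ |∑ i, w i * c i ^ 2| := by
  rcases le_total 0 (∑ i, w i * c i ^ 2) with hc | hc
  · obtain ⟨c', hc', hle⟩ := exists_sum_mul_sq_eq_zero_of_nonneg
      (fun i hi => abs_of_pos hi ▸ hw i hi.ne') c hc
    exact ⟨c', hc', by rwa [abs_of_nonneg hc]⟩
  · obtain ⟨c', hc', hle⟩ := exists_sum_mul_sq_eq_zero_of_nonneg (w := -w)
      (fun i hi => by simpa [abs_of_neg (neg_pos.1 hi)] using hw i (neg_pos.1 hi).ne) c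
      (by simpa [Finset.sum_neg_distrib] using hc)
    refine ⟨c', by simpa [Finset.sum_neg_distrib] using hc', ?_⟩
    rw [abs_of_nonpos hc]
    simpa [Finset.sum_neg_distrib] using hle

end WeightedSumSq

theorem Matrix.IsHermitian.exists_quadForm_eq_zero_and_mul_norm_sq_le {d : ℕ}
    {A : Matrix (Fin d) (Fin d) ℝ} (hA : A.IsHermitian) {α : ℝ}
    (hα : ∀ i, hA.eigenvalues i ≠ 0 → α ≤ |hA.eigenvalues i|) (x : EucSp d) :
    ∃ y : EucSp d, quadForm A y = 0 ∧ α * ‖x - y‖ ^ 2 ≤ |quadForm A x| := by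
  set b := hA.eigenvectorBasis
  obtain ⟨c', hc', hle⟩ := exists_sum_mul_sq_eq_zero hα (b.repr x)
  refine ⟨b.repr.symm (WithLp.toLp 2 c'), ?_, ?_⟩
  · simpa [quadForm_eq_sum_eigenvalues_mul_sq hA, b] using hc'
  · rw [← b.repr.norm_map, map_sub, LinearIsometryEquiv.apply_symm_apply,
      EuclideanSpace.real_norm_sq_eq, quadForm_eq_sum_eigenvalues_mul_sq hA]
    simpa using hle

theorem lojasiewicz_quadratic_form_general
    (d : ℕ) (A : Matrix (Fin d) (Fin d) ℝ) (hA : A.IsSymm)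
    (α : ℝ)
    (hα : IsLeast {a : ℝ | ∃ μ : ℝ, μ ≠ 0 ∧
      (∃ v : EucSp d, v ≠ 0 ∧ ∀ i, (∑ j : Fin d, A i j * v j) = μ * v i) ∧
      a = |μ|} α) :
    ∀ x : EucSp d,
      Metric.infDist x {y : EucSp d | quadForm A y = 0} ≤
        (Real.sqrt α)⁻¹ * Real.sqrt |quadForm A x| := by
  intro x
  have hH : A.IsHermitian := Matrix.isHermitian_iff_isSymm.2 hA
  have hα0 : 0 < α := by
    obtain ⟨μ, hμ, -, rfl⟩ := hα.1
    exact abs_pos.2 hμ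
  have hαeig : ∀ i, hH.eigenvalues i ≠ 0 → α ≤ |hH.eigenvalues i| := fun i hi =>
    hα.2 ⟨_, hi, ⟨_, hH.eigenvectorBasis.orthonormal.ne_zero i, fun k => by
      simpa [Matrix.mulVec, dotProduct] using congrFun (hH.mulVec_eigenvectorBasis i) k⟩, rfl⟩
  obtain ⟨z, hz, hxz⟩ := hH.exists_quadForm_eq_zero_and_mul_norm_sq_le hαeig x
  calc Metric.infDist x {y : EucSp d | quadForm A y = 0} ≤ ‖x - z‖ :=
        (Metric.infDist_le_dist_of_mem (show z ∈ {y | quadForm A y = 0} from hz)).trans_eq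
          (dist_eq_norm x z)
    _ = (Real.sqrt α)⁻¹ * Real.sqrt (α * ‖x - z‖ ^ 2) := by
        rw [Real.sqrt_mul hα0.le, Real.sqrt_sq (norm_nonneg _),
          inv_mul_cancel_left₀ (Real.sqrt_pos.2 hα0).ne']
    _ ≤ (Real.sqrt α)⁻¹ * Real.sqrt |quadForm A x| := by gcongr

/-- Łojasiewicz inequality for quadratic forms: if `A ≠ 0` is symmetric,
`f(x) = ⟨Ax,x⟩` and `α` is the minimum of the absolute values of the nonzero eigenvalues
of `A`, then `dist(x, {f = 0}) ≤ α^{−1/2} |f(x)|^{1/2}` for every `x`. -/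
theorem lojasiewicz_quadratic_form
    (d : ℕ) (hd : 1 ≤ d) (A : Matrix (Fin d) (Fin d) ℝ) (hA : A.IsSymm) (hA0 : A ≠ 0)
    (α : ℝ)
    (hα : IsLeast {a : ℝ | ∃ μ : ℝ, μ ≠ 0 ∧
      (∃ v : EucSp d, v ≠ 0 ∧ ∀ i, (∑ j : Fin d, A i j * v j) = μ * v i) ∧
      a = |μ|} α) :
    ∀ x : EucSp d,
      Metric.infDist x {y : EucSp d | quadForm A y = 0} ≤
        (Real.sqrt α)⁻¹ * Real.sqrt |quadForm A x| :=
  lojasiewicz_quadratic_form_general d A hA α hα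
end
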